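/- Let f : [1,∞) → (0,∞) be continuous, strictly decreasing, with f(x) → 0 as x → ∞, and let σ, δ ∈ (0,1) be constants. Then there exist continuous, strictly increasing functions U, V : [0,1]² → [0,∞), each Lipschitz in its first variable (there is a constant K with |U(r,s) − U(r',s)| ≤ K·|r − r'| and |V(r,s) − V(r',s)| ≤ K·|r − r'| for all arguments), at least one of which is not Lipschitz in its second variable (for no constant K' does |U(r,s) − U(r,s')| ≤ K'·|s − s'| hold for all arguments, or similarly for V), and there exists N, such that for all n ≥ N: with probability at least 1 − δ, for every bijection μ from men to women there is some rank i such that either r^M_{m_i} ≥ σ and man m_i's utility for μ(m_i) is less than U(r^W_{w_i}, 1) − f(n), or r^W_{w_i} ≥ σ and woman w_i's utility for μ⁻¹(w_i) is less than V(r^M_{m_i}, 1) − f(n). -/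

import Mathlib

/-!
Take `U(r, s) = r + s` and `V(r, s) = r + g(s)` with `g(1) - g(1 - u) = 2 f(u^(-1/3)) + √u`.
The `√u` term makes `V` non-Lipschitz in `s`, while the first term makes a score `s ≤ 1 - n⁻³`
cost every woman at least `2 f(n) > f(n)` of utility. With probability at least
`1 - σⁿ - n² · n⁻³` some woman is rated at least `σ` and all women's scores are at most `1 - n⁻³`.
Then the top-rated woman `w₁` is blocked under every matching: her partner is rated at most as
high as `m₁` and her score for him is far from `1`.
-/

open MeasureTheory

noncomputable section

/-- The uniform probability measure on `[0,1]`. -/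
def unif : Measure ℝ := volume.restrict (Set.Icc (0:ℝ) 1)

/-- The joint law of a random one-to-one matching market of size `n`. -/
def marketMeasure (n : ℕ) :
    Measure ((Fin n → ℝ) × (Fin n → ℝ) × (Fin n → Fin n → ℝ) × (Fin n → Fin n → ℝ)) :=
  (Measure.pi fun _ => unif).prod
    ((Measure.pi fun _ => unif).prod
      ((Measure.pi fun _ => Measure.pi fun _ => unif).prod
        (Measure.pi fun _ => Measure.pi fun _ => unif)))

/-- 0-indexed rank: the number of agents with strictly larger rating. -/
def rankOf {n : ℕ} (r : Fin n → ℝ) (a : Fin n) : ℕ :=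
  (Finset.univ.filter fun b => r a < r b).card

/-- A continuous, strictly increasing, nonnegative utility function on `[0,1]²`. -/
structure ContIncr (f : ℝ → ℝ → ℝ) : Prop where
  cont : ContinuousOn (fun q : ℝ × ℝ => f q.1 q.2) (Set.Icc 0 1 ×ˢ Set.Icc 0 1)
  monoX : ∀ y ∈ Set.Icc (0:ℝ) 1, StrictMonoOn (fun x => f x y) (Set.Icc 0 1)
  monoY : ∀ x ∈ Set.Icc (0:ℝ) 1, StrictMonoOn (fun y => f x y) (Set.Icc 0 1)
  nonneg : ∀ x ∈ Set.Icc (0:ℝ) 1, ∀ y ∈ Set.Icc (0:ℝ) 1, 0 ≤ f x y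

/-- `f` is Lipschitz in its first variable on `[0,1]²` with constant `K`. -/
def LipFirst (f : ℝ → ℝ → ℝ) (K : ℝ) : Prop :=
  ∀ r ∈ Set.Icc (0:ℝ) 1, ∀ r' ∈ Set.Icc (0:ℝ) 1, ∀ s ∈ Set.Icc (0:ℝ) 1,
    |f r s - f r' s| ≤ K * |r - r'|

/-- `f` is Lipschitz in its second variable on `[0,1]²` with constant `K`. -/
def LipSecond (f : ℝ → ℝ → ℝ) (K : ℝ) : Prop :=
  ∀ r ∈ Set.Icc (0:ℝ) 1, ∀ s ∈ Set.Icc (0:ℝ) 1, ∀ s' ∈ Set.Icc (0:ℝ) 1,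
    |f r s - f r s'| ≤ K * |s - s'|

open Set Filter Topology
open scoped ENNReal

-- `(r^M, r^W, s^M, s^W)` with `s^M m w = s^M_m(w)` and `s^W w m = s^W_w(m)`.
abbrev Market (n : ℕ) := (Fin n → ℝ) × (Fin n → ℝ) × (Fin n → Fin n → ℝ) × (Fin n → Fin n → ℝ)

instance : IsProbabilityMeasure unif :=
  ⟨by rw [unif, Measure.restrict_apply_univ, Real.volume_Icc]; norm_num⟩

instance (n : ℕ) : IsProbabilityMeasure (marketMeasure n) := by
  unfold marketMeasure; infer_instance

lemma unif_Iio {σ : ℝ} (h1 : σ ≤ 1) : unif (Iio σ) = ENNReal.ofReal σ := by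
  rw [unif, Measure.restrict_apply measurableSet_Iio, show Iio σ ∩ Icc 0 1 = Ico 0 σ by
      ext x; simp only [mem_inter_iff, mem_Iio, mem_Icc, mem_Ico]; grind,
    Real.volume_Ico, sub_zero]

lemma unif_compl_Icc {t : ℝ} (h0 : 0 ≤ t) : unif (Icc 0 t)ᶜ = ENNReal.ofReal (1 - t) := by
  rw [unif, Measure.restrict_apply measurableSet_Icc.compl,
    show (Icc 0 t)ᶜ ∩ Icc 0 1 = Ioc t 1 by
      ext x; simp only [mem_inter_iff, mem_compl_iff, mem_Icc, mem_Ioc]; grind,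
    Real.volume_Ioc]

lemma ofReal_one_sub_le_of_compl_le {α : Type*} [MeasurableSpace α] {μ : Measure α}
    [IsProbabilityMeasure μ] {s : Set α} {ε : ℝ} (hε : 0 ≤ ε) (h : μ sᶜ ≤ ENNReal.ofReal ε) :
    ENNReal.ofReal (1 - ε) ≤ μ s := by
  rw [ENNReal.ofReal_sub _ hε, ENNReal.ofReal_one, tsub_le_iff_right]
  calc (1 : ℝ≥0∞) = μ univ := measure_univ.symm
    _ ≤ μ s + μ sᶜ := measure_univ_le_add_compl s
    _ ≤ μ s + ENNReal.ofReal ε := by gcongr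

section Market

variable {n : ℕ}

lemma marketMeasure_forall_womanRating_lt {σ : ℝ} (h1 : σ ≤ 1) :
    marketMeasure n {ω | ∀ w, ω.2.1 w < σ} = ENNReal.ofReal σ ^ n := by
  have hmp : MeasurePreserving (fun ω : Market n => ω.2.1) (marketMeasure n)
      (Measure.pi fun _ => unif) :=
    measurePreserving_fst.comp measurePreserving_snd
  have hset : {ω : Market n | ∀ w, ω.2.1 w < σ} =
      (fun ω => ω.2.1) ⁻¹' univ.pi fun _ => Iio σ := by
    ext; simp
  rw [hset, hmp.measure_preimage
    (MeasurableSet.univ_pi fun _ => measurableSet_Iio).nullMeasurableSet, Measure.pi_pi]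
  simp [unif_Iio h1]

lemma marketMeasure_womanScore_notMem_Icc {t : ℝ} (h0 : 0 ≤ t) (w m : Fin n) :
    marketMeasure n {ω | ω.2.2.2 w m ∉ Icc 0 t} = ENNReal.ofReal (1 - t) := by
  have hmp : MeasurePreserving (fun ω : Market n => ω.2.2.2 w m) (marketMeasure n) unif :=
    (measurePreserving_eval (fun _ => unif) m).comp
      ((measurePreserving_eval (fun _ => Measure.pi fun _ => unif) w).comp
        (measurePreserving_snd.comp (measurePreserving_snd.comp measurePreserving_snd)))
  exact (hmp.measure_preimage measurableSet_Icc.compl.nullMeasurableSet).trans (unif_compl_Icc h0)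

lemma marketMeasure_exists_womanScore_notMem_Icc_le {t : ℝ} (h0 : 0 ≤ t) :
    marketMeasure n {ω | ∃ w m, ω.2.2.2 w m ∉ Icc 0 t} ≤ n ^ 2 * ENNReal.ofReal (1 - t) := by
  calc marketMeasure n {ω | ∃ w m, ω.2.2.2 w m ∉ Icc 0 t}
      = marketMeasure n (⋃ w, ⋃ m, {ω | ω.2.2.2 w m ∉ Icc 0 t}) := by simp only [ofPred_exists]
    _ ≤ ∑ w, ∑ m, marketMeasure n {ω | ω.2.2.2 w m ∉ Icc 0 t} :=
      (measure_iUnion_fintype_le _ _).trans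
        (Finset.sum_le_sum fun w _ => measure_iUnion_fintype_le _ _)
    _ = n ^ 2 * ENNReal.ofReal (1 - t) := by
      simp only [marketMeasure_womanScore_notMem_Icc h0, Finset.sum_const, Finset.card_univ,
        Fintype.card_fin, nsmul_eq_mul, sq, mul_assoc]

end Market

def decayModulus (f : ℝ → ℝ) (u : ℝ) : ℝ := if 0 < u then 2 * f (u ^ (-(3:ℝ)⁻¹)) else 0

def scoreLoss (f : ℝ → ℝ) (u : ℝ) : ℝ := decayModulus f u + √u

def steepScore (f : ℝ → ℝ) (y : ℝ) : ℝ := scoreLoss f 1 - scoreLoss f (1 - y)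

section SteepScore

variable {f : ℝ → ℝ}

lemma one_le_rpow_neg_inv_three {u : ℝ} (h0 : 0 < u) (h1 : u ≤ 1) : 1 ≤ u ^ (-(3:ℝ)⁻¹) :=
  Real.one_le_rpow_of_pos_of_le_one_of_nonpos h0 h1 (by norm_num)

lemma decayModulus_nonneg (hf_pos : ∀ x, 1 ≤ x → 0 < f x) {u : ℝ} (hu : u ≤ 1) :
    0 ≤ decayModulus f u := by
  unfold decayModulus
  split_ifs with h
  · exact mul_nonneg zero_le_two (hf_pos _ (one_le_rpow_neg_inv_three h hu)).le
  · exact le_rfl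

lemma decayModulus_monotoneOn (hf_pos : ∀ x, 1 ≤ x → 0 < f x)
    (hf_anti : StrictAntiOn f (Ici 1)) : MonotoneOn (decayModulus f) (Icc 0 1) := by
  intro u _ v hv huv
  by_cases hu : 0 < u
  · have hv0 : 0 < v := hu.trans_le huv
    have h1 := one_le_rpow_neg_inv_three hv0 hv.2
    have h2 : v ^ (-(3:ℝ)⁻¹) ≤ u ^ (-(3:ℝ)⁻¹) := Real.rpow_le_rpow_of_nonpos hu huv (by norm_num)
    simp only [decayModulus, if_pos hu, if_pos hv0]
    gcongr 2 * ?_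
    exact hf_anti.antitoneOn h1 (mem_Ici.2 (h1.trans h2)) h2
  · rw [decayModulus, if_neg hu]
    exact decayModulus_nonneg hf_pos hv.2

lemma decayModulus_inv_pow_three {x : ℝ} (hx : 0 < x) : decayModulus f (x ^ 3)⁻¹ = 2 * f x := by
  rw [decayModulus, if_pos (by positivity), ← Real.rpow_natCast, ← Real.rpow_neg hx.le,
    ← Real.rpow_mul hx.le]
  norm_num

lemma tendsto_decayModulus_nhdsGT_zero (hf_lim : Tendsto f atTop (𝓝 0)) :
    Tendsto (decayModulus f) (𝓝[>] 0) (𝓝 0) := by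
  have h : Tendsto (fun u : ℝ => 2 * f (u ^ (-(3:ℝ)⁻¹))) (𝓝[>] 0) (𝓝 (2 * 0)) :=
    (hf_lim.comp (tendsto_rpow_neg_nhdsGT_zero (by norm_num))).const_mul 2
  rw [mul_zero] at h
  exact h.congr' (eventually_nhdsWithin_of_forall fun u hu => (if_pos hu).symm)

lemma continuousOn_decayModulus (hf_cont : ContinuousOn f (Ici 1))
    (hf_lim : Tendsto f atTop (𝓝 0)) : ContinuousOn (decayModulus f) (Icc 0 1) := by
  intro x hx
  rcases hx.1.eq_or_lt with rfl | hx0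
  · have h : ContinuousWithinAt (decayModulus f) (Ioi 0) 0 := by
      simpa [ContinuousWithinAt, decayModulus] using tendsto_decayModulus_nhdsGT_zero hf_lim
    exact (continuousWithinAt_Ioi_iff_Ici.1 h).mono Icc_subset_Ici_self
  · have hmaps : MapsTo (fun u : ℝ => u ^ (-(3:ℝ)⁻¹)) (Icc 0 1 ∩ Ioi 0) (Ici 1) :=
      fun u hu => one_le_rpow_neg_inv_three hu.2 hu.1.2
    have hpow : ContinuousWithinAt (fun u : ℝ => u ^ (-(3:ℝ)⁻¹)) (Icc 0 1 ∩ Ioi 0) x :=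
      (Real.continuousAt_rpow_const x _ (Or.inl hx0.ne')).continuousWithinAt
    have hf_at : ContinuousWithinAt f (Ici 1) (x ^ (-(3:ℝ)⁻¹)) := hf_cont _ (hmaps ⟨hx, hx0⟩)
    have h : ContinuousWithinAt (decayModulus f) (Icc 0 1 ∩ Ioi 0) x :=
      ((hf_at.comp (f := fun u : ℝ => u ^ (-(3:ℝ)⁻¹)) hpow hmaps).const_mul 2).congr
        (fun u hu => if_pos hu.2) (if_pos hx0)
    exact (continuousWithinAt_inter (Ioi_mem_nhds hx0)).1 h

lemma scoreLoss_zero : scoreLoss f 0 = 0 := by simp [scoreLoss, decayModulus]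

lemma sqrt_le_scoreLoss (hf_pos : ∀ x, 1 ≤ x → 0 < f x) {u : ℝ} (hu : u ≤ 1) :
    √u ≤ scoreLoss f u :=
  le_add_of_nonneg_left (decayModulus_nonneg hf_pos hu)

lemma scoreLoss_strictMonoOn (hf_pos : ∀ x, 1 ≤ x → 0 < f x)
    (hf_anti : StrictAntiOn f (Ici 1)) : StrictMonoOn (scoreLoss f) (Icc 0 1) :=
  (decayModulus_monotoneOn hf_pos hf_anti).add_strictMono
    (Real.strictMonoOn_sqrt.mono Icc_subset_Ici_self)

lemma continuousOn_scoreLoss (hf_cont : ContinuousOn f (Ici 1))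
    (hf_lim : Tendsto f atTop (𝓝 0)) : ContinuousOn (scoreLoss f) (Icc 0 1) :=
  (continuousOn_decayModulus hf_cont hf_lim).add Real.continuous_sqrt.continuousOn

lemma steepScore_one_sub_steepScore (y : ℝ) :
    steepScore f 1 - steepScore f y = scoreLoss f (1 - y) := by
  simp [steepScore, scoreLoss_zero]

lemma steepScore_strictMonoOn (hf_pos : ∀ x, 1 ≤ x → 0 < f x)
    (hf_anti : StrictAntiOn f (Ici 1)) : StrictMonoOn (steepScore f) (Icc 0 1) := by
  intro a ha b hb hab
  have := scoreLoss_strictMonoOn hf_pos hf_anti ⟨sub_nonneg.2 hb.2, by linarith [hb.1]⟩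
    ⟨sub_nonneg.2 ha.2, by linarith [ha.1]⟩ (by linarith : 1 - b < 1 - a)
  simp only [steepScore]
  linarith

lemma steepScore_nonneg (hf_pos : ∀ x, 1 ≤ x → 0 < f x) (hf_anti : StrictAntiOn f (Ici 1))
    {y : ℝ} (hy : y ∈ Icc 0 1) : 0 ≤ steepScore f y :=
  sub_nonneg.2 <| (scoreLoss_strictMonoOn hf_pos hf_anti).monotoneOn
    ⟨sub_nonneg.2 hy.2, by linarith [hy.1]⟩ ⟨zero_le_one, le_rfl⟩ (by linarith [hy.1])

lemma continuousOn_steepScore (hf_cont : ContinuousOn f (Ici 1))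
    (hf_lim : Tendsto f atTop (𝓝 0)) : ContinuousOn (steepScore f) (Icc 0 1) :=
  continuousOn_const.sub <| (continuousOn_scoreLoss hf_cont hf_lim).comp
    (continuous_const.sub continuous_id).continuousOn
    fun y hy => ⟨sub_nonneg.2 hy.2, by linarith [hy.1]⟩

lemma steepScore_lt_sub (hf_pos : ∀ x, 1 ≤ x → 0 < f x) (hf_anti : StrictAntiOn f (Ici 1))
    {x s : ℝ} (hx : 1 ≤ x) (hs : s ∈ Icc 0 (1 - (x ^ 3)⁻¹)) :
    steepScore f s < steepScore f 1 - f x := by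
  have hfx := hf_pos x hx
  have hinv : 0 < (x ^ 3)⁻¹ := by positivity
  have hmod : 2 * f x ≤ decayModulus f (1 - s) := by
    rw [← decayModulus_inv_pow_three (by linarith)]
    exact decayModulus_monotoneOn hf_pos hf_anti
      ⟨hinv.le, inv_le_one_of_one_le₀ (one_le_pow₀ hx)⟩
      ⟨by linarith [hs.2], by linarith [hs.1]⟩ (by linarith [hs.2])
  have hloss := steepScore_one_sub_steepScore (f := f) s
  simp only [scoreLoss] at hloss
  linarith [Real.sqrt_nonneg (1 - s)]

end SteepScore

lemma contIncr_add {g : ℝ → ℝ} (hc : ContinuousOn g (Icc 0 1)) (hm : StrictMonoOn g (Icc 0 1))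
    (h0 : ∀ y ∈ Icc (0:ℝ) 1, 0 ≤ g y) : ContIncr fun x y => x + g y where
  cont := continuous_fst.continuousOn.add (hc.comp continuous_snd.continuousOn fun _ hq => hq.2)
  monoX _ _ _ _ _ _ hab := add_lt_add_left hab _
  monoY _ _ _ ha _ hb hab := add_lt_add_right (hm ha hb hab) _
  nonneg _ hx y hy := add_nonneg hx.1 (h0 y hy)

lemma lipFirst_add (g : ℝ → ℝ) : LipFirst (fun x y => x + g y) 1 := by
  intro r _ r' _ s _
  rw [add_sub_add_right_eq_sub, one_mul]

lemma not_lipSecond_of_sqrt_le {V : ℝ → ℝ → ℝ} {r : ℝ} (hr : r ∈ Icc (0:ℝ) 1)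
    (h : ∀ u ∈ Ioc (0:ℝ) 1, √u ≤ |V r 1 - V r (1 - u)|) : ¬ ∃ K, LipSecond V K := by
  rintro ⟨K, hK⟩
  set B := |K| + 1
  have hB : 1 ≤ B := le_add_of_nonneg_left (abs_nonneg K)
  have hu : (B ^ 2)⁻¹ ∈ Ioc (0:ℝ) 1 := ⟨by positivity, inv_le_one_of_one_le₀ (one_le_pow₀ hB)⟩
  have hsqrt : √(B ^ 2)⁻¹ = B⁻¹ := by rw [Real.sqrt_inv, Real.sqrt_sq (by linarith)]
  have hlip := hK r hr 1 ⟨zero_le_one, le_rfl⟩ (1 - (B ^ 2)⁻¹)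
    ⟨by linarith [hu.2], by linarith [hu.1]⟩
  rw [sub_sub_cancel, abs_of_pos hu.1] at hlip
  have hlt : K * (B ^ 2)⁻¹ < B⁻¹ := by
    rw [sq, mul_inv, ← mul_assoc]
    calc K * B⁻¹ * B⁻¹ < 1 * B⁻¹ := by
          gcongr
          rw [mul_inv_lt_iff₀ (by linarith), one_mul]
          linarith [le_abs_self K]
      _ = B⁻¹ := one_mul _
  linarith [h _ hu, hsqrt]

lemma not_lipSecond_add_steepScore {f : ℝ → ℝ} (hf_pos : ∀ x, 1 ≤ x → 0 < f x) :
    ¬ ∃ K, LipSecond (fun x y => x + steepScore f y) K := by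
  refine not_lipSecond_of_sqrt_le (r := 0) ⟨le_rfl, zero_le_one⟩ fun u hu => ?_
  rw [add_sub_add_left_eq_sub, steepScore_one_sub_steepScore, sub_sub_cancel]
  exact (sqrt_le_scoreLoss hf_pos hu.2).trans (le_abs_self _)

lemma rankOf_eq_zero_of_forall_le {n : ℕ} {r : Fin n → ℝ} {a : Fin n} (h : ∀ b, r b ≤ r a) :
    rankOf r a = 0 := by
  simpa [rankOf, Finset.filter_eq_empty_iff] using h

lemma exists_aligned_blocking {n : ℕ} {σ c t : ℝ} {g : ℝ → ℝ} (ω : Market n)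
    (hσ : ∃ w, σ ≤ ω.2.1 w) (hs : ∀ w m, ω.2.2.2 w m ∈ Icc 0 t)
    (hg : ∀ s ∈ Icc 0 t, g s < g 1 - c) (μ : Fin n ≃ Fin n) :
    ∃ a b, rankOf ω.1 a = rankOf ω.2.1 b ∧ σ ≤ ω.2.1 b ∧
      ω.1 (μ.symm b) + g (ω.2.2.2 b (μ.symm b)) < ω.1 a + g 1 - c := by
  obtain ⟨w, hw⟩ := hσ
  have : Nonempty (Fin n) := ⟨w⟩
  obtain ⟨a, ha⟩ := Finite.exists_max ω.1
  obtain ⟨b, hb⟩ := Finite.exists_max ω.2.1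
  refine ⟨a, b, ?_, hw.trans (hb w), ?_⟩
  · rw [rankOf_eq_zero_of_forall_le ha, rankOf_eq_zero_of_forall_le hb]
  · linarith [ha (μ.symm b), hg _ (hs b (μ.symm b))]

lemma marketMeasure_compl_le {n : ℕ} {σ t : ℝ} (hσ0 : 0 ≤ σ) (hσ1 : σ ≤ 1) (ht : 0 ≤ t)
    (ht1 : t ≤ 1) :
    marketMeasure n {ω : Market n | (∃ w, σ ≤ ω.2.1 w) ∧ ∀ w m, ω.2.2.2 w m ∈ Icc 0 t}ᶜ ≤
      ENNReal.ofReal (σ ^ n + n ^ 2 * (1 - t)) := by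
  have hsub : {ω : Market n | (∃ w, σ ≤ ω.2.1 w) ∧ ∀ w m, ω.2.2.2 w m ∈ Icc 0 t}ᶜ ⊆
      {ω | ∀ w, ω.2.1 w < σ} ∪ {ω | ∃ w m, ω.2.2.2 w m ∉ Icc 0 t} := by
    intro ω hω
    simp only [mem_compl_iff, mem_ofPred_eq, not_and_or, not_exists, not_le, not_forall] at hω
    exact hω
  calc _ ≤ marketMeasure n {ω | ∀ w, ω.2.1 w < σ} +
        marketMeasure n {ω | ∃ w m, ω.2.2.2 w m ∉ Icc 0 t} :=
        (measure_mono hsub).trans (measure_union_le _ _)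
    _ ≤ ENNReal.ofReal σ ^ n + n ^ 2 * ENNReal.ofReal (1 - t) :=
        add_le_add (marketMeasure_forall_womanRating_lt hσ1).le
          (marketMeasure_exists_womanScore_notMem_Icc_le ht)
    _ = ENNReal.ofReal (σ ^ n + n ^ 2 * (1 - t)) := by
        rw [ENNReal.ofReal_add (by positivity) (by nlinarith), ENNReal.ofReal_pow hσ0,
          ENNReal.ofReal_mul (by positivity), ENNReal.ofReal_pow (Nat.cast_nonneg n),
          ENNReal.ofReal_natCast]

lemma eventually_pow_add_inv_le {σ δ : ℝ} (hσ0 : 0 ≤ σ) (hσ1 : σ < 1) (hδ : 0 < δ) :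
    ∀ᶠ n : ℕ in atTop, σ ^ n + (n : ℝ)⁻¹ ≤ δ := by
  have h : Tendsto (fun n : ℕ => σ ^ n + (n : ℝ)⁻¹) atTop (𝓝 (0 + 0)) :=
    (tendsto_pow_atTop_nhds_zero_of_lt_one hσ0 hσ1).add tendsto_inv_atTop_nhds_zero_nat
  rw [add_zero] at h
  exact h.eventually (ge_mem_nhds hδ)

lemma ofReal_one_sub_le_marketMeasure {σ : ℝ} (hσ0 : 0 ≤ σ) (hσ1 : σ ≤ 1) {n : ℕ}
    (hn : 1 ≤ n) :
    ENNReal.ofReal (1 - (σ ^ n + (n : ℝ)⁻¹)) ≤ marketMeasure n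
      {ω : Market n | (∃ w, σ ≤ ω.2.1 w) ∧ ∀ w m, ω.2.2.2 w m ∈ Icc 0 (1 - ((n : ℝ) ^ 3)⁻¹)} := by
  have hn : (1 : ℝ) ≤ n := by exact_mod_cast hn
  have hinv : 0 < ((n : ℝ) ^ 3)⁻¹ := by positivity
  have hinv1 : ((n : ℝ) ^ 3)⁻¹ ≤ 1 := inv_le_one_of_one_le₀ (one_le_pow₀ hn)
  have hmass : (n : ℝ) ^ 2 * (1 - (1 - ((n : ℝ) ^ 3)⁻¹)) = (n : ℝ)⁻¹ := by
    field_simp; ring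
  have hcompl := marketMeasure_compl_le (n := n) hσ0 hσ1 (sub_nonneg.2 hinv1)
    (sub_le_self _ hinv.le)
  rw [hmass] at hcompl
  exact ofReal_one_sub_le_of_compl_le (by positivity) hcompl

/-- For any continuous, strictly decreasing `f : [1,∞) → (0,∞)`
tending to `0`, and constants `σ, δ ∈ (0,1)`, there are continuous strictly
increasing utility functions `U, V`, Lipschitz in the first variable, at least one
of which is not Lipschitz in the second variable, and `N`, such that for all
`n ≥ N`: with probability at least `1 − δ`, every bijection `μ` (men → women) has
some rank `i` for which either `r_{m_i} ≥ σ` and `m_i`'s utility for `μ(m_i)` is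
below `U(r_{w_i},1) − f(n)`, or `r_{w_i} ≥ σ` and `w_i`'s utility for `μ⁻¹(w_i)`
is below `V(r_{m_i},1) − f(n)`. -/
theorem stmt17 (f : ℝ → ℝ) (hf_pos : ∀ x, 1 ≤ x → 0 < f x)
    (hf_cont : ContinuousOn f (Set.Ici 1)) (hf_anti : StrictAntiOn f (Set.Ici 1))
    (hf_lim : Filter.Tendsto f Filter.atTop (nhds 0))
    (σ δ : ℝ) (hσ : σ ∈ Set.Ioo (0:ℝ) 1) (hδ : δ ∈ Set.Ioo (0:ℝ) 1) :
    ∃ U V : ℝ → ℝ → ℝ, ContIncr U ∧ ContIncr V ∧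
      (∃ K : ℝ, LipFirst U K ∧ LipFirst V K) ∧
      ((¬ ∃ K' : ℝ, LipSecond U K') ∨ (¬ ∃ K' : ℝ, LipSecond V K')) ∧
      ∃ N : ℕ, ∀ n : ℕ, N ≤ n →
        ENNReal.ofReal (1 - δ) ≤
        marketMeasure n {ω | ∀ mtc : Fin n ≃ Fin n,
          ∃ a b : Fin n, rankOf ω.1 a = rankOf ω.2.1 b ∧
            ((σ ≤ ω.1 a ∧
                U (ω.2.1 (mtc a)) (ω.2.2.1 a (mtc a)) < U (ω.2.1 b) 1 - f n) ∨
             (σ ≤ ω.2.1 b ∧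
                V (ω.1 (mtc.symm b)) (ω.2.2.2 b (mtc.symm b)) < V (ω.1 a) 1 - f n))} := by
  obtain ⟨N, hN⟩ := eventually_atTop.1
    ((eventually_ge_atTop 1).and (eventually_pow_add_inv_le hσ.1.le hσ.2 hδ.1))
  refine ⟨fun x y => x + y, fun x y => x + steepScore f y,
    contIncr_add continuousOn_id strictMonoOn_id fun y hy => hy.1,
    contIncr_add (continuousOn_steepScore hf_cont hf_lim) (steepScore_strictMonoOn hf_pos hf_anti)
      fun y hy => steepScore_nonneg hf_pos hf_anti hy,
    ⟨1, lipFirst_add id, lipFirst_add _⟩, Or.inr (not_lipSecond_add_steepScore hf_pos),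
    N, fun n hn => ?_⟩
  obtain ⟨hn1, hnδ⟩ := hN n hn
  refine (ENNReal.ofReal_le_ofReal (by linarith)).trans <|
    (ofReal_one_sub_le_marketMeasure hσ.1.le hσ.2.le hn1).trans (measure_mono fun ω hω μ => ?_)
  obtain ⟨a, b, hab, hb, hlt⟩ := exists_aligned_blocking (g := steepScore f) ω hω.1 hω.2
    (fun s hs => steepScore_lt_sub hf_pos hf_anti (by exact_mod_cast hn1) hs) μ
  exact ⟨a, b, hab, Or.inr ⟨hb, hlt⟩⟩

end
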